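/- Let Φ be an M×N real matrix, λ > 0, y ∈ ℝ^M, and Γ an N×N diagonal matrix with strictly positive diagonal. Then yᵀ (λI + Φ Γ Φᵀ)⁻¹ y = min over x ∈ ℝ^N of (1/λ)‖y − Φx‖² + xᵀ Γ⁻¹ x, and the minimum is attained at x = Γ Φᵀ (λI + Φ Γ Φᵀ)⁻¹ y. -/
import Mathlib


open Matrix

private lemma dotmv {m n : ℕ} (A : Matrix (Fin m) (Fin n) ℝ) (u : Fin n → ℝ)
    (v : Fin m → ℝ) : (A *ᵥ u) ⬝ᵥ v = u ⬝ᵥ (Aᵀ *ᵥ v) := by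
  rw [dotProduct_comm, dotProduct_mulVec, ← mulVec_transpose, dotProduct_comm]

theorem stmt_6 {M N : ℕ} (Φ : Matrix (Fin M) (Fin N) ℝ) (l : ℝ) (hl : 0 < l)
    (y : Fin M → ℝ) (γ : Fin N → ℝ) (hγ : ∀ j, 0 < γ j) :
    (∀ x : Fin N → ℝ,
        y ⬝ᵥ ((l • (1 : Matrix (Fin M) (Fin M) ℝ) +
              Φ * Matrix.diagonal γ * Φ.transpose)⁻¹).mulVec y ≤
          (1 / l) * ((y - Φ.mulVec x) ⬝ᵥ (y - Φ.mulVec x)) +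
            x ⬝ᵥ ((Matrix.diagonal γ)⁻¹).mulVec x) ∧
    (let x₀ := (Matrix.diagonal γ * Φ.transpose *
        (l • (1 : Matrix (Fin M) (Fin M) ℝ) +
          Φ * Matrix.diagonal γ * Φ.transpose)⁻¹).mulVec y
     y ⬝ᵥ ((l • (1 : Matrix (Fin M) (Fin M) ℝ) +
          Φ * Matrix.diagonal γ * Φ.transpose)⁻¹).mulVec y =
       (1 / l) * ((y - Φ.mulVec x₀) ⬝ᵥ (y - Φ.mulVec x₀)) +
         x₀ ⬝ᵥ ((Matrix.diagonal γ)⁻¹).mulVec x₀) := by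
  classical
  have hl' : l ≠ 0 := hl.ne'
  set Γ : Matrix (Fin N) (Fin N) ℝ := Matrix.diagonal γ with hΓ
  set A : Matrix (Fin M) (Fin M) ℝ :=
    l • (1 : Matrix (Fin M) (Fin M) ℝ) + Φ * Γ * Φᵀ with hAdef
  -- A is positive definite, hence invertible
  have hΓsd : Γ.PosSemidef := Matrix.posSemidef_diagonal_iff.mpr fun i => (hγ i).le
  have h1 : (l • (1 : Matrix (Fin M) (Fin M) ℝ)).PosDef := by
    rw [smul_one_eq_diagonal]
    exact Matrix.posDef_diagonal_iff.mpr fun _ => hl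
  have hΦΓ : (Φ * Γ * Φᵀ).PosSemidef := by
    have h := hΓsd.mul_mul_conjTranspose_same Φ
    rwa [conjTranspose_eq_transpose_of_trivial] at h
  have hA : A.PosDef := h1.add_posSemidef hΦΓ
  have hAdet : IsUnit A.det := (Matrix.isUnit_iff_isUnit_det _).mp hA.isUnit
  have hAinv : A * A⁻¹ = 1 := Matrix.mul_nonsing_inv _ hAdet
  set z : Fin M → ℝ := A⁻¹ *ᵥ y with hz
  have hyz : A *ᵥ z = y := by rw [hz, mulVec_mulVec, hAinv, one_mulVec]
  set w : Fin N → ℝ := Φᵀ *ᵥ z with hw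
  set x₀ : Fin N → ℝ := Γ *ᵥ w with hx₀
  have hΓdet : IsUnit Γ.det := by
    rw [hΓ, det_diagonal]
    exact (Finset.prod_pos fun i _ => hγ i).ne'.isUnit
  have hΓΓ' : Γ⁻¹ * Γ = 1 := Matrix.nonsing_inv_mul _ hΓdet
  have hΓT : Γᵀ = Γ := Matrix.diagonal_transpose γ
  have hΓinv : Γ⁻¹ = Matrix.diagonal (fun i => (γ i)⁻¹) := by
    apply Matrix.inv_eq_right_inv
    rw [hΓ, Matrix.diagonal_mul_diagonal,
      show (fun i => γ i * (γ i)⁻¹) = fun _ => (1 : ℝ) from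
        funext fun i => mul_inv_cancel₀ (hγ i).ne', Matrix.diagonal_one]
  have hΓinvT : (Γ⁻¹)ᵀ = Γ⁻¹ := by rw [hΓinv, Matrix.diagonal_transpose]
  have hΓinvx₀ : Γ⁻¹ *ᵥ x₀ = w := by
    rw [hx₀, mulVec_mulVec, hΓΓ', one_mulVec]
  have hΦx₀ : Φ *ᵥ x₀ = (Φ * Γ * Φᵀ) *ᵥ z := by
    rw [hx₀, hw, mulVec_mulVec, mulVec_mulVec]
  have hres : y - Φ *ᵥ x₀ = l • z := by
    rw [hΦx₀, ← hyz, hAdef, add_mulVec, smul_mulVec, one_mulVec]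
    abel
  have h2 : (Φ *ᵥ x₀) ⬝ᵥ z = x₀ ⬝ᵥ w := by rw [dotmv, ← hw]
  have hy_z : y ⬝ᵥ z = l * (z ⬝ᵥ z) + x₀ ⬝ᵥ w :=
    calc y ⬝ᵥ z = (A *ᵥ z) ⬝ᵥ z := by rw [hyz]
      _ = (l • z + (Φ * Γ * Φᵀ) *ᵥ z) ⬝ᵥ z := by
          rw [hAdef, add_mulVec, smul_mulVec, one_mulVec]
      _ = l * (z ⬝ᵥ z) + (Φ *ᵥ x₀) ⬝ᵥ z := by
          rw [← hΦx₀, add_dotProduct, smul_dotProduct, smul_eq_mul]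
      _ = l * (z ⬝ᵥ z) + x₀ ⬝ᵥ w := by rw [h2]
  -- value at the minimiser
  have hval : y ⬝ᵥ z =
      (1 / l) * ((y - Φ *ᵥ x₀) ⬝ᵥ (y - Φ *ᵥ x₀)) + x₀ ⬝ᵥ (Γ⁻¹ *ᵥ x₀) := by
    rw [hres, hΓinvx₀, smul_dotProduct, dotProduct_smul, smul_eq_mul, smul_eq_mul,
      hy_z]
    field_simp
  constructor
  · intro x
    set d : Fin N → ℝ := x - x₀ with hd
    set u : Fin M → ℝ := Φ *ᵥ d with hu
    have hx : x = x₀ + d := by rw [hd]; ring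
    have e1 : y - Φ *ᵥ x = l • z - u := by
      rw [hx, mulVec_add, ← hu, ← hres]; abel
    have hdw : d ⬝ᵥ w = u ⬝ᵥ z := by rw [hu, dotmv, hw]
    have hcross : x₀ ⬝ᵥ (Γ⁻¹ *ᵥ d) = u ⬝ᵥ z := by
      rw [dotProduct_comm, dotmv, hΓinvT, hΓinvx₀, hdw]
    have key : (1 / l) * ((y - Φ *ᵥ x) ⬝ᵥ (y - Φ *ᵥ x)) + x ⬝ᵥ (Γ⁻¹ *ᵥ x) =
        y ⬝ᵥ z + (1 / l) * (u ⬝ᵥ u) + d ⬝ᵥ (Γ⁻¹ *ᵥ d) := by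
      rw [e1]
      conv_lhs => rw [hx]
      rw [show Γ⁻¹ *ᵥ (x₀ + d) = Γ⁻¹ *ᵥ x₀ + Γ⁻¹ *ᵥ d from mulVec_add ..,
        hΓinvx₀]
      simp only [dotProduct_sub, sub_dotProduct, smul_dotProduct,
        dotProduct_smul, dotProduct_add, add_dotProduct, smul_eq_mul]
      rw [hy_z, hcross, hdw, dotProduct_comm z u]
      field_simp
      ring
    have hu2 : 0 ≤ u ⬝ᵥ u := Finset.sum_nonneg fun i _ => mul_self_nonneg _
    have hd2 : 0 ≤ d ⬝ᵥ (Γ⁻¹ *ᵥ d) := by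
      rw [hΓinv]
      refine Finset.sum_nonneg fun i _ => ?_
      simp only [mulVec_diagonal]
      have : d i * ((γ i)⁻¹ * d i) = (γ i)⁻¹ * (d i * d i) := by ring
      rw [this]
      exact mul_nonneg (inv_nonneg.2 (hγ i).le) (mul_self_nonneg _)
    rw [key]
    have h1l : 0 ≤ (1 / l) * (u ⬝ᵥ u) := by positivity
    linarith
  · intro x₀'
    have hx₀' : x₀' = x₀ := by
      show (Γ * Φᵀ * A⁻¹) *ᵥ y = x₀
      rw [hx₀, hw, hz, ← mulVec_mulVec, ← mulVec_mulVec]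
    rw [hx₀']
    exact hval
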